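/- Let G be a cubic graph and M1, M2 disjoint matchings with |M1 ∪ M2| maximum over all pairs of disjoint matchings of G. Then G − M1 − M2 contains no path with four edges. -/

import Mathlib

open SimpleGraph

/-- A matching in `G` given as a set of edges: edges of `G`, pairwise vertex-disjoint. -/
def IsMatchingSet {V : Type*} (G : SimpleGraph V) (M : Set (Sym2 V)) : Prop :=
  M ⊆ G.edgeSet ∧ ∀ e ∈ M, ∀ f ∈ M, e ≠ f → ∀ v, v ∈ e → v ∉ f

/-- `M1, M2` are disjoint matchings of `G` with `|M1 ∪ M2|` maximum over all pairs of
disjoint matchings of `G`. -/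
def MaxDisjointPair {V : Type*} (G : SimpleGraph V) (M1 M2 : Set (Sym2 V)) : Prop :=
  IsMatchingSet G M1 ∧ IsMatchingSet G M2 ∧ Disjoint M1 M2 ∧
  ∀ N1 N2 : Set (Sym2 V), IsMatchingSet G N1 → IsMatchingSet G N2 → Disjoint N1 N2 →
    (N1 ∪ N2).ncard ≤ (M1 ∪ M2).ncard

/-- Adjacency in `Ĝ = G − M1 − M2`: adjacency via an edge of `G` not in `M1 ∪ M2`. -/
def hatAdj {V : Type*} (G : SimpleGraph V) (M1 M2 : Set (Sym2 V)) (x y : V) : Prop :=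
  G.Adj x y ∧ s(x, y) ∉ M1 ∪ M2

/-!
The middle vertex `u3` of the path has two `Ĝ`-edges, so by cubicity it lies on at most one of
`M1`, `M2`; say not on `M1`. By maximality `u2` and `u4` then lie on `M1` (else add `u2u3` or
`u3u4` to `M1`), hence, having two `Ĝ`-edges, not on `M2`, and then `u3` lies on `M2`. Thus
`u2`, `u3`, `u4` are ends of paths of `M1 ∪ M2`, a graph of maximum degree two. Exchange `M1`
and `M2` on the component through `u2`. If it misses `u3`, then `u2u3` can be added to the new
`M1`; otherwise it misses `u4` (a path has two ends), and `u3u4` can be added to the new `M2`.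
-/

namespace SimpleGraph

variable {V : Type*} {G : SimpleGraph V}

def MaxDegreeLeTwo (G : SimpleGraph V) : Prop :=
  ∀ w a b c, G.Adj w a → G.Adj w b → G.Adj w c → a = b ∨ a = c ∨ b = c

lemma Walk.IsPath.exists_adj_ne_of_mem_support {a b w : V} {p : G.Walk a b} (hp : p.IsPath)
    (hw : w ∈ p.support) (hwa : w ≠ a) (hwb : w ≠ b) :
    ∃ x y, G.Adj w x ∧ G.Adj w y ∧ x ≠ y ∧ x ∈ p.support ∧ y ∈ p.support := by
  obtain ⟨i, rfl, hi⟩ := Walk.mem_support_iff_exists_getVert.mp hw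
  have hi0 : i ≠ 0 := by rintro rfl; exact hwa p.getVert_zero
  have hil : i ≠ p.length := by rintro rfl; exact hwb p.getVert_length
  refine ⟨p.getVert (i - 1), p.getVert (i + 1), ?_, p.adj_getVert_succ (by omega),
    fun h => ?_, p.getVert_mem_support _, p.getVert_mem_support _⟩
  · simpa [Nat.sub_add_cancel (Nat.pos_of_ne_zero hi0)] using
      (p.adj_getVert_succ (i := i - 1) (by omega)).symm
  · have := hp.getVert_injOn (show i - 1 ≤ p.length by omega) (show i + 1 ≤ p.length by omega) h
    omega

lemma Walk.IsPath.mem_support_of_adj (hG : G.MaxDegreeLeTwo)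
    {a b : V} (ha : (G.neighborSet a).Subsingleton) (hb : (G.neighborSet b).Subsingleton)
    (hab : a ≠ b) {p : G.Walk a b} (hp : p.IsPath) {w v : V} (hw : w ∈ p.support)
    (hwv : G.Adj w v) : v ∈ p.support := by
  have hnil : ¬ p.Nil := Walk.not_nil_of_ne hab
  by_cases hwa : w = a
  · subst hwa
    rw [ha hwv (p.adj_snd hnil)]
    exact p.getVert_mem_support 1
  by_cases hwb : w = b
  · subst hwb
    rw [hb hwv (p.adj_penultimate hnil).symm]
    exact p.getVert_mem_support _
  obtain ⟨x, y, hx, hy, hxy, hxp, hyp⟩ := hp.exists_adj_ne_of_mem_support hw hwa hwb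
  rcases hG w v x y hwv hx hy with rfl | rfl | h
  · exact hxp
  · exact hyp
  · exact absurd h hxy

lemma eq_of_reachable_of_subsingleton_neighborSet (hG : G.MaxDegreeLeTwo)
    {a b c : V} (ha : (G.neighborSet a).Subsingleton) (hb : (G.neighborSet b).Subsingleton)
    (hc : (G.neighborSet c).Subsingleton) (hab : a ≠ b) (hac : a ≠ c)
    (hrb : G.Reachable a b) (hrc : G.Reachable a c) : b = c := by
  classical
  by_contra hbc
  let p := (hrb.symm.trans hrc).some.toPath
  have hap : a ∈ (p : G.Walk b c).support := by
    refine hrb.symm.mem_subgraphVerts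
      (H := (⊤ : G.Subgraph).induce {v | v ∈ (p : G.Walk b c).support})
      (fun w hw v hwv => ⟨hw, p.2.mem_support_of_adj hG hb hc hbc hw hwv, hwv⟩) ?_
    exact (p : G.Walk b c).start_mem_support
  obtain ⟨x, y, hx, hy, hxy, -⟩ := p.2.exists_adj_ne_of_mem_support hap hab hac
  exact hxy (ha hx hy)

end SimpleGraph

section Components

variable {V : Type*} {S : Set (Sym2 V)}

def edgesReachableFrom (S : Set (Sym2 V)) (u : V) : Set (Sym2 V) :=
  {e | ∃ v ∈ e, (fromEdgeSet S).Reachable u v}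

lemma reachable_fromEdgeSet_of_mem {e : Sym2 V} (he : e ∈ S) {v w : V} (hv : v ∈ e)
    (hw : w ∈ e) : (fromEdgeSet S).Reachable v w := by
  by_cases hvw : v = w
  · exact hvw ▸ Reachable.refl v
  · have hvw' : s(v, w) ∈ S := (Sym2.mem_and_mem_iff hvw).mp ⟨hv, hw⟩ ▸ he
    exact Adj.reachable ((fromEdgeSet_adj S).mpr ⟨hvw', hvw⟩)

lemma mem_edgesReachableFrom_iff {e : Sym2 V} (he : e ∈ S) {u v : V} (hv : v ∈ e) :
    e ∈ edgesReachableFrom S u ↔ (fromEdgeSet S).Reachable u v :=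
  ⟨fun ⟨_, hw, hu⟩ => hu.trans (reachable_fromEdgeSet_of_mem he hw hv), fun hu => ⟨v, hv, hu⟩⟩

end Components

section Matchings

variable {V : Type*} {G : SimpleGraph V} {M : Set (Sym2 V)}

lemma IsMatchingSet.eq_of_mem (hM : IsMatchingSet G M) {e f : Sym2 V} {x : V} (he : e ∈ M)
    (hf : f ∈ M) (hxe : x ∈ e) (hxf : x ∈ f) : e = f :=
  by_contra fun hne => hM.2 e he f hf hne x hxe hxf

lemma IsMatchingSet.eq_of_mem_union {A B : Set (Sym2 V)} (hA : IsMatchingSet G A)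
    {e : Sym2 V} {x : V} (he : e ∈ A) (hxe : x ∈ e) (hB : ¬ ∃ f ∈ B, x ∈ f) :
    ∀ f ∈ A ∪ B, x ∈ f → f = e := by
  rintro f (hf | hf) hxf
  · exact hA.eq_of_mem hf he hxf hxe
  · exact absurd ⟨f, hf, hxf⟩ hB

lemma IsMatchingSet.insert (hM : IsMatchingSet G M) {x y : V} (hxy : G.Adj x y)
    (hx : ¬ ∃ e ∈ M, x ∈ e) (hy : ¬ ∃ e ∈ M, y ∈ e) : IsMatchingSet G (insert s(x, y) M) := by
  refine ⟨Set.insert_subset (G.mem_edgeSet.mpr hxy) hM.1, ?_⟩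
  have hfree : ∀ f ∈ M, ∀ v ∈ s(x, y), v ∉ f := by
    rintro f hf v hv hvf
    rcases Sym2.mem_iff.mp hv with rfl | rfl
    exacts [hx ⟨f, hf, hvf⟩, hy ⟨f, hf, hvf⟩]
  rintro e (rfl | he) f (rfl | hf) hne v hve hvf
  · exact hne rfl
  · exact hfree f hf v hve hvf
  · exact hfree e he v hvf hve
  · exact hM.2 e he f hf hne v hve hvf

lemma IsMatchingSet.maxDegreeLeTwo_fromEdgeSet_union {A B : Set (Sym2 V)}
    (hA : IsMatchingSet G A) (hB : IsMatchingSet G B) : (fromEdgeSet (A ∪ B)).MaxDegreeLeTwo := by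
  have eq_of_mem : ∀ {M}, IsMatchingSet G M → ∀ {w a b : V}, s(w, a) ∈ M → s(w, b) ∈ M → a = b :=
    fun hM _ _ _ ha hb => Sym2.congr_right.mp (hM.eq_of_mem ha hb (Sym2.mem_mk_left _ _)
      (Sym2.mem_mk_left _ _))
  intro w a b c ha hb hc
  rcases ha.1 with ha | ha <;> rcases hb.1 with hb | hb <;> rcases hc.1 with hc | hc <;>
    first
    | exact Or.inl (eq_of_mem hA ha hb) | exact Or.inl (eq_of_mem hB ha hb)
    | exact Or.inr (Or.inl (eq_of_mem hA ha hc)) | exact Or.inr (Or.inl (eq_of_mem hB ha hc))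
    | exact Or.inr (Or.inr (eq_of_mem hA hb hc)) | exact Or.inr (Or.inr (eq_of_mem hB hb hc))

lemma neighborSet_fromEdgeSet_subsingleton {S : Set (Sym2 V)} {e : Sym2 V} {x : V}
    (h : ∀ f ∈ S, x ∈ f → f = e) : ((fromEdgeSet S).neighborSet x).Subsingleton :=
  fun _ ha _ hb => Sym2.congr_right.mp
    ((h _ ha.1 (Sym2.mem_mk_left _ _)).trans (h _ hb.1 (Sym2.mem_mk_left _ _)).symm)

end Matchings

section Swap

variable {V : Type*} {G : SimpleGraph V} {M1 M2 C : Set (Sym2 V)}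

def swapOn (M1 M2 C : Set (Sym2 V)) : Set (Sym2 V) := (M1 \ C) ∪ (M2 ∩ C)

lemma IsMatchingSet.swapOn (h1 : IsMatchingSet G M1) (h2 : IsMatchingSet G M2)
    (hC : ∀ e ∈ M1, ∀ f ∈ M2, ∀ v ∈ e, v ∈ f → (e ∈ C ↔ f ∈ C)) :
    IsMatchingSet G (swapOn M1 M2 C) := by
  refine ⟨Set.union_subset (Set.sdiff_subset.trans h1.1) (Set.inter_subset_left.trans h2.1), ?_⟩
  rintro e (⟨he, heC⟩ | ⟨he, heC⟩) f (⟨hf, hfC⟩ | ⟨hf, hfC⟩) hne v hve hvf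
  · exact h1.2 e he f hf hne v hve hvf
  · exact heC ((hC e he f hf v hve hvf).mpr hfC)
  · exact hfC ((hC f hf e he v hvf hve).mpr heC)
  · exact h2.2 e he f hf hne v hve hvf

lemma swapOn_union_swapOn : swapOn M1 M2 C ∪ swapOn M2 M1 C = M1 ∪ M2 := by
  ext g
  simp only [swapOn, Set.mem_union, Set.mem_sdiff, Set.mem_inter_iff]
  tauto

lemma Disjoint.swapOn (hd : Disjoint M1 M2) : Disjoint (swapOn M1 M2 C) (swapOn M2 M1 C) := by
  rw [Set.disjoint_left]
  rintro g (⟨hg, hgC⟩ | ⟨hg, hgC⟩) (⟨hg', hgC'⟩ | ⟨hg', hgC'⟩)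
  exacts [hd.notMem_of_mem_left hg hg', hgC hgC', hgC' hgC, hd.notMem_of_mem_left hg' hg]

lemma not_exists_mem_swapOn {x : V} (h1 : ∀ e ∈ M1, x ∈ e → e ∈ C)
    (h2 : ∀ f ∈ M2, x ∈ f → f ∉ C) : ¬ ∃ e ∈ swapOn M1 M2 C, x ∈ e := by
  rintro ⟨e, ⟨he, heC⟩ | ⟨he, heC⟩, hxe⟩
  exacts [heC (h1 e he hxe), h2 e he hxe heC]

end Swap

section Maximality

variable {V : Type*} {G : SimpleGraph V} {M1 M2 N1 N2 : Set (Sym2 V)}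

lemma hatAdj.symm {x y : V} (h : hatAdj G M1 M2 x y) : hatAdj G M1 M2 y x :=
  ⟨h.1.symm, Sym2.eq_swap ▸ h.2⟩

lemma hatAdj_swap {x y : V} : hatAdj G M2 M1 x y ↔ hatAdj G M1 M2 x y := by
  rw [hatAdj, hatAdj, Set.union_comm]

lemma MaxDisjointPair.symm (h : MaxDisjointPair G M1 M2) : MaxDisjointPair G M2 M1 :=
  ⟨h.2.1, h.1, h.2.2.1.symm, Set.union_comm M1 M2 ▸ h.2.2.2⟩

/-- Otherwise `s(x, y)` could be added to `N1`. -/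
lemma MaxDisjointPair.exists_mem_of_hatAdj [Finite V] (hmax : MaxDisjointPair G M1 M2)
    (hN1 : IsMatchingSet G N1) (hN2 : IsMatchingSet G N2) (hd : Disjoint N1 N2)
    (hU : N1 ∪ N2 = M1 ∪ M2) {x y : V} (hxy : hatAdj G M1 M2 x y) :
    (∃ e ∈ N1, x ∈ e) ∨ ∃ e ∈ N1, y ∈ e := by
  by_contra! ⟨hx, hy⟩
  have hnew : s(x, y) ∉ N1 ∪ N2 := hU ▸ hxy.2
  have hle := hmax.2.2.2 (insert s(x, y) N1) N2
    (hN1.insert hxy.1 (fun ⟨e, he, hxe⟩ => hx e he hxe) (fun ⟨e, he, hye⟩ => hy e he hye))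
    hN2 (Set.disjoint_insert_left.mpr ⟨fun h => hnew (Or.inr h), hd⟩)
  rw [Set.insert_union, Set.ncard_insert_of_notMem hnew, hU] at hle
  omega

end Maximality

section Cubic

variable {V : Type*} {G : SimpleGraph V} {M1 M2 : Set (Sym2 V)}

lemma not_mem_both_of_hatAdj {x p q : V} [Fintype (G.neighborSet x)] (hx : G.degree x ≤ 3)
    (h1 : M1 ⊆ G.edgeSet) (h2 : M2 ⊆ G.edgeSet) (hd : Disjoint M1 M2)
    (hp : hatAdj G M1 M2 x p) (hq : hatAdj G M1 M2 x q) (hpq : p ≠ q)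
    (h1x : ∃ e ∈ M1, x ∈ e) : ¬ ∃ f ∈ M2, x ∈ f := by
  classical
  rintro ⟨f, hf, hxf⟩
  obtain ⟨e, he, hxe⟩ := h1x
  obtain ⟨a, rfl⟩ := Sym2.mem_iff_exists.mp hxe
  obtain ⟨b, rfl⟩ := Sym2.mem_iff_exists.mp hxf
  have hab : a ≠ b := fun hab => hd.notMem_of_mem_left he (hab ▸ hf)
  have hpa : p ≠ a := fun h => hp.2 (Or.inl (h ▸ he))
  have hpb : p ≠ b := fun h => hp.2 (Or.inr (h ▸ hf))
  have hqa : q ≠ a := fun h => hq.2 (Or.inl (h ▸ he))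
  have hqb : q ≠ b := fun h => hq.2 (Or.inr (h ▸ hf))
  have hcard : ({p, q, a, b} : Finset V).card = 4 :=
    Finset.card_eq_four.mpr ⟨p, q, a, b, hpq, hpa, hpb, hqa, hqb, hab, rfl⟩
  have hsub : ({p, q, a, b} : Finset V) ⊆ G.neighborFinset x := by
    simp [Finset.insert_subset_iff, hp.1, hq.1, G.mem_edgeSet.mp (h1 he),
      G.mem_edgeSet.mp (h2 hf)]
  have := Finset.card_le_card hsub
  rw [hcard, card_neighborFinset_eq_degree] at this
  omega

end Cubic

theorem MaxDisjointPair.false_of_hatPath {V : Type*} [Finite V] {G : SimpleGraph V}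
    [G.LocallyFinite] (hdeg : ∀ v, G.degree v ≤ 3) {M1 M2 : Set (Sym2 V)}
    (hmax : MaxDisjointPair G M1 M2) {u1 u2 u3 u4 u5 : V}
    (h13 : u1 ≠ u3) (h23 : u2 ≠ u3) (h24 : u2 ≠ u4) (h34 : u3 ≠ u4) (h35 : u3 ≠ u5)
    (a12 : hatAdj G M1 M2 u1 u2) (a23 : hatAdj G M1 M2 u2 u3) (a34 : hatAdj G M1 M2 u3 u4)
    (a45 : hatAdj G M1 M2 u4 u5) (hu3 : ¬ ∃ e ∈ M1, u3 ∈ e) : False := by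
  have ⟨h1, h2, hd, _⟩ := hmax
  obtain ⟨e2, he2, hu2e2⟩ : ∃ e ∈ M1, u2 ∈ e :=
    (hmax.exists_mem_of_hatAdj h1 h2 hd rfl a23).resolve_right hu3
  obtain ⟨e4, he4, hu4e4⟩ : ∃ e ∈ M1, u4 ∈ e :=
    (hmax.exists_mem_of_hatAdj h1 h2 hd rfl a34).resolve_left hu3
  have hu2 := not_mem_both_of_hatAdj (hdeg u2) h1.1 h2.1 hd a12.symm a23 h13 ⟨e2, he2, hu2e2⟩
  have hu4 := not_mem_both_of_hatAdj (hdeg u4) h1.1 h2.1 hd a34.symm a45 h35 ⟨e4, he4, hu4e4⟩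
  obtain ⟨f3, hf3, hu3f3⟩ : ∃ f ∈ M2, u3 ∈ f :=
    (hmax.symm.exists_mem_of_hatAdj h2 h1 hd.symm rfl (hatAdj_swap.mpr a23)).resolve_left hu2
  have uniq2 := h1.eq_of_mem_union he2 hu2e2 hu2
  have uniq3 := h2.eq_of_mem_union hf3 hu3f3 hu3
  have uniq4 := h1.eq_of_mem_union he4 hu4e4 hu4
  -- Exchange `M1` and `M2` on the component of `M1 ∪ M2` through `u2`.
  set C := edgesReachableFrom (M1 ∪ M2) u2
  have hC : ∀ e ∈ M1, ∀ f ∈ M2, ∀ v ∈ e, v ∈ f → (e ∈ C ↔ f ∈ C) := fun e he f hf v hve hvf =>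
    (mem_edgesReachableFrom_iff (Or.inl he) hve).trans
      (mem_edgesReachableFrom_iff (Or.inr hf) hvf).symm
  have hN1 := h1.swapOn h2 hC
  have hN2 := h2.swapOn h1 fun f hf e he v hvf hve => (hC e he f hf v hve hvf).symm
  have he2C : e2 ∈ C := ⟨u2, hu2e2, Reachable.refl _⟩
  by_cases hf3C : f3 ∈ C
  · by_cases he4C : e4 ∈ C
    · -- `u2`, `u3`, `u4` would be three ends of one path component of `M1 ∪ M2`.
      exact h34 (eq_of_reachable_of_subsingleton_neighborSet
        (h1.maxDegreeLeTwo_fromEdgeSet_union h2)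
        (neighborSet_fromEdgeSet_subsingleton uniq2)
        (neighborSet_fromEdgeSet_subsingleton (Set.union_comm M1 M2 ▸ uniq3))
        (neighborSet_fromEdgeSet_subsingleton uniq4) h23 h24
        ((mem_edgesReachableFrom_iff (Or.inr hf3) hu3f3).mp hf3C)
        ((mem_edgesReachableFrom_iff (Or.inl he4) hu4e4).mp he4C))
    · rcases hmax.exists_mem_of_hatAdj hN2 hN1 hd.swapOn.symm
        (by rw [Set.union_comm, swapOn_union_swapOn]) a34 with h | h
      · exact not_exists_mem_swapOn (fun f hf hu => uniq3 f (Or.inl hf) hu ▸ hf3C)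
          (fun e he hu => absurd ⟨e, he, hu⟩ hu3) h
      · exact not_exists_mem_swapOn (fun f hf hu => absurd ⟨f, hf, hu⟩ hu4)
          (fun e he hu heC => he4C (uniq4 e (Or.inl he) hu ▸ heC)) h
  · rcases hmax.exists_mem_of_hatAdj hN1 hN2 hd.swapOn swapOn_union_swapOn a23 with h | h
    · exact not_exists_mem_swapOn (fun e he hu => uniq2 e (Or.inl he) hu ▸ he2C)
        (fun f hf hu => absurd ⟨f, hf, hu⟩ hu2) h
    · exact not_exists_mem_swapOn (fun e he hu => absurd ⟨e, he, hu⟩ hu3)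
        (fun f hf hu hfC => hf3C (uniq3 f (Or.inl hf) hu ▸ hfC)) h

theorem stmt5 {V : Type*} [Fintype V] (G : SimpleGraph V) [DecidableRel G.Adj]
    (hcubic : ∀ v : V, G.degree v = 3) (M1 M2 : Set (Sym2 V))
    (hmax : MaxDisjointPair G M1 M2) :
    ¬ ∃ u1 u2 u3 u4 u5 : V, u1 ≠ u2 ∧ u1 ≠ u3 ∧ u1 ≠ u4 ∧ u1 ≠ u5 ∧ u2 ≠ u3 ∧
      u2 ≠ u4 ∧ u2 ≠ u5 ∧ u3 ≠ u4 ∧ u3 ≠ u5 ∧ u4 ≠ u5 ∧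
      hatAdj G M1 M2 u1 u2 ∧ hatAdj G M1 M2 u2 u3 ∧ hatAdj G M1 M2 u3 u4 ∧
      hatAdj G M1 M2 u4 u5 := by
  rintro ⟨u1, u2, u3, u4, u5, -, h13, -, -, h23, h24, -, h34, h35, -, a12, a23, a34, a45⟩
  have hdeg : ∀ v, G.degree v ≤ 3 := fun v => (hcubic v).le
  by_cases hu3 : ∃ e ∈ M1, u3 ∈ e
  · -- Then `u3` misses `M2`: exchange the roles of `M1` and `M2`.
    have hu3' := not_mem_both_of_hatAdj (hdeg u3) hmax.1.1 hmax.2.1.1 hmax.2.2.1 a23.symm a34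
      h24 hu3
    exact hmax.symm.false_of_hatPath hdeg h13 h23 h24 h34 h35 (hatAdj_swap.mpr a12)
      (hatAdj_swap.mpr a23) (hatAdj_swap.mpr a34) (hatAdj_swap.mpr a45) hu3'
  · exact hmax.false_of_hatPath hdeg h13 h23 h24 h34 h35 a12 a23 a34 a45 hu3
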